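/- Min-entropy purity bound: Let ξ_{AR} be a positive semidefinite matrix on H_A⊗H_R, let ζ_R be a positive definite matrix on H_R with Tr ζ_R = 1, and let λ ∈ ℝ be such that 2^{−λ} I_A⊗ζ_R − ξ_{AR} is positive semidefinite. Then Tr[ ((I_A⊗ζ_R^{−1/2}) ξ_{AR})² ] ≤ 2^{−λ} · Tr(ξ_{AR}). In particular, if ζ_R and λ saturate the definition of Hmin(A|R)_ξ, the left-hand side divided by Tr(ξ_{AR}) is at most 2^{−Hmin(A|R)_ξ}. -/

import Mathlib

open scoped Kronecker
open MeasureTheory Matrix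
open scoped ComplexOrder

noncomputable section

/-- The positive semidefinite square root of a positive semidefinite matrix (the
definition Mathlib had in December 2024, since removed). -/
def Matrix.PosSemidef.sqrt {n 𝕜 : Type*} [Fintype n] [RCLike 𝕜] [DecidableEq n]
    {A : Matrix n n 𝕜} (hA : A.PosSemidef) : Matrix n n 𝕜 :=
  (hA.1.eigenvectorUnitary : Matrix n n 𝕜) * diagonal ((↑) ∘ (√·) ∘ hA.1.eigenvalues) *
    (star hA.1.eigenvectorUnitary : Matrix n n 𝕜)

namespace Decoupling

/-- We equip the unitary group with its Borel σ-algebra. -/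
instance (n : Type*) [Fintype n] [DecidableEq n] :
    MeasurableSpace (Matrix.unitaryGroup n ℂ) := borel _

instance (n : Type*) [Fintype n] [DecidableEq n] :
    BorelSpace (Matrix.unitaryGroup n ℂ) := ⟨rfl⟩

/-- The trace norm (Schatten 1-norm) `‖X‖₁ = Tr √(XᴴX)` of a complex matrix. -/
def trNorm {n : Type*} [Fintype n] [DecidableEq n] (X : Matrix n n ℂ) : ℝ :=
  ((Matrix.posSemidef_conjTranspose_mul_self X).sqrt.trace).re

/-- The Hilbert–Schmidt norm (Schatten 2-norm) `‖X‖₂ = √(Tr (XᴴX))`. -/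
def hsNorm {n : Type*} [Fintype n] (X : Matrix n n ℂ) : ℝ :=
  Real.sqrt ((Xᴴ * X).trace.re)

/-- Partial trace over the first tensor factor. -/
def ptrFst {a r : Type*} [Fintype a] (ρ : Matrix (a × r) (a × r) ℂ) : Matrix r r ℂ :=
  Matrix.of fun i j => ∑ k, ρ (k, i) (k, j)

/-- Partial trace over the second tensor factor. -/
def ptrSnd {a r : Type*} [Fintype r] (ρ : Matrix (a × r) (a × r) ℂ) : Matrix a a ℂ :=
  Matrix.of fun i j => ∑ k, ρ (i, k) (j, k)

/-- The maximally entangled state `Φ_{AA'}` on `H_A ⊗ H_{A'}`. -/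
def maxEnt (a : Type*) [Fintype a] [DecidableEq a] : Matrix (a × a) (a × a) ℂ :=
  Matrix.of fun p q => if p.1 = p.2 ∧ q.1 = q.2 then (Fintype.card a : ℂ)⁻¹ else 0

/-- The tensor product `T ⊗ E` of two superoperators (given on basis matrices, which
for linear `T`, `E` agrees with the usual tensor product of linear maps). -/
def tensorHom {a a' b r : Type*} [Fintype a] [Fintype a'] [DecidableEq a] [DecidableEq a']
    (T : Matrix a a ℂ → Matrix b b ℂ) (E : Matrix a' a' ℂ → Matrix r r ℂ)
    (M : Matrix (a × a') (a × a') ℂ) : Matrix (b × r) (b × r) ℂ :=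
  Matrix.of fun p q => ∑ i, ∑ j, ∑ k, ∑ l,
    M (i, k) (j, l) * T (Matrix.single i j 1) p.1 q.1
      * E (Matrix.single k l 1) p.2 q.2

/-- The Choi–Jamiołkowski representation `ω = (T ⊗ id)(Φ_{AA'})`, with the output (`B`)
factor first and the copy `A'` second. -/
def choi {a b : Type*} [Fintype a] [DecidableEq a]
    (T : Matrix a a ℂ → Matrix b b ℂ) : Matrix (b × a) (b × a) ℂ :=
  tensorHom T id (maxEnt a)

/-- Reindexing that exchanges the two tensor factors. -/
def swapIdx {a b : Type*} (M : Matrix (a × b) (a × b) ℂ) : Matrix (b × a) (b × a) ℂ :=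
  M.submatrix Prod.swap Prod.swap

/-- The conditional min-entropy `Hmin(A|B)_ρ` of a bipartite operator (conditioning on the
second tensor factor). -/
def Hmin {a b : Type*} [Fintype a] [DecidableEq a] [Fintype b]
    (ρ : Matrix (a × b) (a × b) ℂ) : ℝ :=
  sSup {x : ℝ | ∃ σ : Matrix b b ℂ, σ.PosSemidef ∧ σ.trace = 1 ∧
    ((2 : ℝ) ^ (-x) • ((1 : Matrix a a ℂ) ⊗ₖ σ) - ρ).PosSemidef}

/-- A subnormalized density operator. -/
def IsSubDensity {n : Type*} [Fintype n] (ρ : Matrix n n ℂ) : Prop :=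
  ρ.PosSemidef ∧ ρ.trace.re ≤ 1

/-- Conjugation `(U ⊗ 1_R) ρ (U ⊗ 1_R)ᴴ` on the first factor. -/
def conjA {a r : Type*} [Fintype a] [Fintype r] [DecidableEq r]
    (U : Matrix a a ℂ) (ρ : Matrix (a × r) (a × r) ℂ) : Matrix (a × r) (a × r) ℂ :=
  (U ⊗ₖ (1 : Matrix r r ℂ)) * ρ * (U ⊗ₖ (1 : Matrix r r ℂ))ᴴ

/-- Two-fold conjugation `U^{⊗2} M (U^{⊗2})ᴴ`. -/
def conj2 {a : Type*} [Fintype a] (U : Matrix a a ℂ) (M : Matrix (a × a) (a × a) ℂ) :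
    Matrix (a × a) (a × a) ℂ :=
  (U ⊗ₖ U) * M * (U ⊗ₖ U)ᴴ

/-- The Haar two-fold twirl `G_H(M) = ∫ U^{⊗2} M (U†)^{⊗2} dU` (entrywise integral). -/
def twirlHaar {a : Type*} [Fintype a] [DecidableEq a]
    (μ : Measure (Matrix.unitaryGroup a ℂ)) (M : Matrix (a × a) (a × a) ℂ) :
    Matrix (a × a) (a × a) ℂ :=
  Matrix.of fun p q => ∫ U : Matrix.unitaryGroup a ℂ, conj2 (U : Matrix a a ℂ) M p q ∂μ

/-- The two-fold twirl `G_W(M) = ∑ i, p i • U_i^{⊗2} M (U_i†)^{⊗2}` of a finite family. -/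
def twirlMix {ι a : Type*} [Fintype ι] [Fintype a] [DecidableEq a]
    (p : ι → ℝ) (V : ι → Matrix.unitaryGroup a ℂ) (M : Matrix (a × a) (a × a) ℂ) :
    Matrix (a × a) (a × a) ℂ :=
  ∑ i, p i • conj2 (V i : Matrix a a ℂ) M

/-- `‖S‖⋄ ≤ δ`: the trace norm of `(S ⊗ id_R)(X)` is at most `δ ‖X‖₁` for every ancilla `R`
and every `X`. -/
def DiamondLE {c : Type*} [Fintype c] [DecidableEq c]
    (S : Matrix c c ℂ → Matrix c c ℂ) (δ : ℝ) : Prop :=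
  ∀ (m : ℕ) (X : Matrix (c × Fin m) (c × Fin m) ℂ),
    trNorm (tensorHom S id X) ≤ δ * trNorm X

/-- `{(p i, V i)}` is a `δ`-approximate unitary two-design (w.r.t. the Haar probability
measure `μ`). -/
def IsApproxTwoDesign {ι a : Type*} [Fintype ι] [Fintype a] [DecidableEq a]
    (μ : Measure (Matrix.unitaryGroup a ℂ))
    (p : ι → ℝ) (V : ι → Matrix.unitaryGroup a ℂ) (δ : ℝ) : Prop :=
  (∀ i, 0 ≤ p i) ∧ (∑ i, p i = 1) ∧
    DiamondLE (fun M => twirlMix p V M - twirlHaar μ M) δ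

end Decoupling

/-!
Conjugating the hypothesis by the Hermitian matrix `K = 1_A ⊗ ζ_R^{-1/2}` turns it into
`K ξ K ≤ 2^{-λ} 1`. By cyclicity, `Tr[(K ξ)²] = Tr[ξ (K ξ K)]`, and pairing an operator
inequality with the positive semidefinite `ξ` under the trace preserves it, giving
`Tr[ξ (K ξ K)] ≤ 2^{-λ} Tr ξ`.
-/

namespace Matrix

variable {n 𝕜 : Type*} [Fintype n] [RCLike 𝕜] [DecidableEq n] {A : Matrix n n 𝕜}

theorem PosSemidef.isHermitian_sqrt (hA : A.PosSemidef) : hA.sqrt.IsHermitian :=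
  isHermitian_mul_mul_conjTranspose _ (isHermitian_diagonal_of_self_adjoint _ (by ext; simp))

theorem PosSemidef.sqrt_mul_self (hA : A.PosSemidef) : hA.sqrt * hA.sqrt = A := by
  set U : Matrix n n 𝕜 := (hA.1.eigenvectorUnitary : Matrix n n 𝕜)
  have hU : star U * U = 1 := Unitary.star_mul_self_of_mem hA.1.eigenvectorUnitary.2
  have hD : diagonal (((↑) ∘ (√·) ∘ hA.1.eigenvalues) : n → 𝕜) *
      diagonal ((↑) ∘ (√·) ∘ hA.1.eigenvalues) = diagonal (RCLike.ofReal ∘ hA.1.eigenvalues) := by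
    rw [diagonal_mul_diagonal]
    congr 1
    ext i
    simp only [Function.comp_apply, ← RCLike.ofReal_mul,
      Real.mul_self_sqrt (hA.eigenvalues_nonneg i)]
  conv_rhs => rw [hA.1.spectral_theorem, Unitary.conjStarAlgAut_apply]
  calc hA.sqrt * hA.sqrt
      = U * (diagonal ((↑) ∘ (√·) ∘ hA.1.eigenvalues) * (star U * U) *
          diagonal ((↑) ∘ (√·) ∘ hA.1.eigenvalues)) * star U := by
        simp only [PosSemidef.sqrt, U, Matrix.mul_assoc]
    _ = _ := by rw [hU, Matrix.mul_one, hD]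

theorem PosDef.sqrt_inv_mul_self_mul_sqrt_inv (hA : A.PosDef) :
    hA.posSemidef.sqrt⁻¹ * A * hA.posSemidef.sqrt⁻¹ = 1 := by
  set s := hA.posSemidef.sqrt
  have hs : IsUnit s.det := by
    refine isUnit_of_mul_isUnit_left (y := s.det) ?_
    rw [← det_mul, hA.posSemidef.sqrt_mul_self]
    exact isUnit_iff_ne_zero.mpr hA.det_pos.ne'
  rw [← hA.posSemidef.sqrt_mul_self, nonsing_inv_mul_cancel_left _ _ hs, mul_nonsing_inv _ hs]

theorem PosSemidef.trace_mul_le_trace_mul {B C : Matrix n n 𝕜} (hA : A.PosSemidef)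
    (hBC : (C - B).PosSemidef) :
    (A * B).trace ≤ (A * C).trace := by
  have h := (hBC.mul_mul_conjTranspose_same hA.sqrt).trace_nonneg
  rw [hA.isHermitian_sqrt.eq, trace_mul_cycle, hA.sqrt_mul_self, Matrix.mul_sub, trace_sub] at h
  exact sub_nonneg.mp h

end Matrix

namespace Decoupling

theorem minentropy_purity_bound_general {a r : Type*} [Fintype a] [DecidableEq a]
    [Fintype r] [DecidableEq r]
    (ξ : Matrix (a × r) (a × r) ℂ) (hξ : ξ.PosSemidef)
    (ζ : Matrix r r ℂ) (hζ : ζ.PosDef)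
    (lam : ℝ)
    (h : ((2 : ℝ) ^ (-lam) • ((1 : Matrix a a ℂ) ⊗ₖ ζ) - ξ).PosSemidef) :
    (((((1 : Matrix a a ℂ) ⊗ₖ (hζ.posSemidef.sqrt)⁻¹) * ξ) *
        (((1 : Matrix a a ℂ) ⊗ₖ (hζ.posSemidef.sqrt)⁻¹) * ξ)).trace).re ≤
      (2 : ℝ) ^ (-lam) * ξ.trace.re := by
  set c : ℝ := (2 : ℝ) ^ (-lam)
  set K : Matrix (a × r) (a × r) ℂ := (1 : Matrix a a ℂ) ⊗ₖ (hζ.posSemidef.sqrt)⁻¹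
  have hK : Kᴴ = K := by
    rw [conjTranspose_kronecker, conjTranspose_one, (hζ.posSemidef.isHermitian_sqrt.inv).eq]
  have hKζK : K * ((1 : Matrix a a ℂ) ⊗ₖ ζ) * K = 1 := by
    rw [← mul_kronecker_mul, ← mul_kronecker_mul, one_mul, one_mul,
      hζ.sqrt_inv_mul_self_mul_sqrt_inv, one_kronecker_one]
  have hKξK : (c • (1 : Matrix (a × r) (a × r) ℂ) - K * ξ * K).PosSemidef := by
    have := h.mul_mul_conjTranspose_same K
    rwa [hK, Matrix.mul_sub, Matrix.sub_mul, Matrix.mul_smul, Matrix.smul_mul, hKζK] at this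
  calc ((K * ξ) * (K * ξ)).trace.re = (ξ * (K * ξ * K)).trace.re := by
        rw [← Matrix.mul_assoc, trace_mul_comm]
    _ ≤ (ξ * (c • 1)).trace.re := (Complex.le_def.mp (hξ.trace_mul_le_trace_mul hKξK)).1
    _ = c * ξ.trace.re := by simp

/-- **Min-entropy purity bound**: if `2^{-λ} 1_A ⊗ ζ_R − ξ_{AR}` is positive semidefinite for a
positive definite state `ζ_R`, then `Tr[((1_A ⊗ ζ_R^{-1/2}) ξ_{AR})²] ≤ 2^{-λ} Tr ξ_{AR}`. -/
theorem minentropy_purity_bound {a r : Type*} [Fintype a] [DecidableEq a]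
    [Fintype r] [DecidableEq r]
    (ξ : Matrix (a × r) (a × r) ℂ) (hξ : ξ.PosSemidef)
    (ζ : Matrix r r ℂ) (hζ : ζ.PosDef) (hζtr : ζ.trace = 1)
    (lam : ℝ)
    (h : ((2 : ℝ) ^ (-lam) • ((1 : Matrix a a ℂ) ⊗ₖ ζ) - ξ).PosSemidef) :
    (((((1 : Matrix a a ℂ) ⊗ₖ (hζ.posSemidef.sqrt)⁻¹) * ξ) *
        (((1 : Matrix a a ℂ) ⊗ₖ (hζ.posSemidef.sqrt)⁻¹) * ξ)).trace).re ≤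
      (2 : ℝ) ^ (-lam) * ξ.trace.re :=
  minentropy_purity_bound_general ξ hξ ζ hζ lam h
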